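/- Let X, Y be Tychonoff spaces, φ : 𝒰_X → 𝒰_Y an order-isomorphism, and f the φ-induced function. For each closed-and-open subset A of X, the image f[A] is closed-and-open in Y and φ(C_A(X)) = C_{f[A]}(Y). Moreover, if Y is zero-dimensional, then f is continuous. -/

import Mathlib

open Set TopologicalSpace

/-- The basic set `V(f,A,ε)` of functions uniformly `ε`-close to `f` on `A`. -/
def Vset {X : Type*} [TopologicalSpace X] (f : C(X, ℝ)) (A : Set X) (ε : ℝ) : Set C(X, ℝ) :=
  {g | ∀ x ∈ A, |f x - g x| < ε}

/-- A nonempty directed family of subsets of `X`. -/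
structure DirFam (X : Type*) where
  sets : Set (Set X)
  nonempty : sets.Nonempty
  directed : ∀ A ∈ sets, ∀ B ∈ sets, ∃ E ∈ sets, A ∪ B ⊆ E

/-- The uniform topology `C_γ` on `C(X)` determined by a directed family `γ`. -/
def DirFam.top {X : Type*} [TopologicalSpace X] (γ : DirFam X) : TopologicalSpace C(X, ℝ) where
  IsOpen U := ∀ f ∈ U, ∃ A ∈ γ.sets, ∃ ε > 0, Vset f A ε ⊆ U
  isOpen_univ := by
    intro f _
    obtain ⟨A, hA⟩ := γ.nonempty
    exact ⟨A, hA, 1, one_pos, Set.subset_univ _⟩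
  isOpen_inter := by
    intro U W hU hW f hf
    obtain ⟨A, hA, ε, hε, hAU⟩ := hU f hf.1
    obtain ⟨B, hB, δ, hδ, hBW⟩ := hW f hf.2
    obtain ⟨E, hE, hsub⟩ := γ.directed A hA B hB
    refine ⟨E, hE, min ε δ, lt_min hε hδ, fun g hg => ⟨?_, ?_⟩⟩
    · exact hAU fun x hx =>
        lt_of_lt_of_le (hg x (hsub (Set.mem_union_left _ hx))) (min_le_left _ _)
    · exact hBW fun x hx =>
        lt_of_lt_of_le (hg x (hsub (Set.mem_union_right _ hx))) (min_le_right _ _)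
  isOpen_sUnion := by
    intro S hS f hf
    obtain ⟨U, hU, hfU⟩ := hf
    obtain ⟨A, hA, ε, hε, h⟩ := hS U hU f hfU
    exact ⟨A, hA, ε, hε, h.trans (Set.subset_sUnion_of_mem hU)⟩

/-- The lattice of uniform topologies on `C(X)`. -/
def UX (X : Type*) [TopologicalSpace X] : Set (TopologicalSpace C(X, ℝ)) :=
  {t | ∃ γ : DirFam X, t = γ.top}

/-- `tle s t` means the topology `s` is coarser than or equal to `t`
(inclusion of topologies, `τ_s ⊆ τ_t`). -/
def tle {X : Type*} [TopologicalSpace X] (s t : TopologicalSpace C(X, ℝ)) : Prop :=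
  ∀ U : Set C(X, ℝ), s.IsOpen U → t.IsOpen U

/-- The directed family `{∅}`, generating the indiscrete topology `C_∅`. -/
def cEmptyFam (X : Type*) : DirFam X :=
  ⟨{∅}, Set.singleton_nonempty _, by
    intro A hA B hB
    rw [Set.mem_singleton_iff] at hA hB
    exact ⟨∅, Set.mem_singleton _, by simp [hA, hB]⟩⟩

/-- The directed family `{X}`, generating the uniform-convergence topology `C_u`. -/
def cUnivFam (X : Type*) : DirFam X :=
  ⟨{Set.univ}, Set.singleton_nonempty _, fun A _ B _ =>
    ⟨Set.univ, Set.mem_singleton _, Set.subset_univ _⟩⟩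

/-- The directed family `{{x}}`. -/
def ptFam {X : Type*} (x : X) : DirFam X :=
  ⟨{{x}}, Set.singleton_nonempty _, by
    intro A hA B hB
    rw [Set.mem_singleton_iff] at hA hB
    exact ⟨{x}, Set.mem_singleton _, by simp [hA, hB]⟩⟩

/-- The directed family `{A}`. -/
def setFam {X : Type*} (A : Set X) : DirFam X :=
  ⟨{A}, Set.singleton_nonempty _, by
    intro B hB E hE
    rw [Set.mem_singleton_iff] at hB hE
    exact ⟨A, Set.mem_singleton _, by simp [hB, hE]⟩⟩

/-- The topology `C_x`. -/
def Cpt {X : Type*} [TopologicalSpace X] (x : X) : TopologicalSpace C(X, ℝ) :=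
  (ptFam x).top

/-- The topology `C_A`. -/
def CSet {X : Type*} [TopologicalSpace X] (A : Set X) : TopologicalSpace C(X, ℝ) :=
  (setFam A).top

/-- The pushforward `f*γ = {f[A] : A ∈ γ}` of a directed family along a map. -/
def DirFam.push {X Y : Type*} (f : X → Y) (γ : DirFam X) : DirFam Y :=
  ⟨(Set.image f) '' γ.sets, γ.nonempty.image _, by
    rintro A ⟨A', hA', rfl⟩ B ⟨B', hB', rfl⟩
    obtain ⟨E, hE, h⟩ := γ.directed A' hA' B' hB'
    exact ⟨f '' E, ⟨E, hE, rfl⟩, by rw [← Set.image_union]; exact fun _ ⟨a, ha, e⟩ => ⟨a, h ha, e⟩⟩⟩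



section Aux

variable {X : Type*} [TopologicalSpace X] [T2Space X] [CompletelyRegularSpace X]

lemma urysohn_aux {B : Set X} {x : X} (hx : x ∉ closure B) :
    ∃ h : C(X, ℝ), h x = 1 ∧ (∀ b ∈ B, h b = 0) ∧ ∀ z, |h z| ≤ 1 := by
  obtain ⟨g, hgc, hgx, hgK⟩ :=
    CompletelyRegularSpace.completely_regular x (closure B) isClosed_closure hx
  refine ⟨⟨fun z => 1 - (g z : ℝ), continuous_const.sub (continuous_subtype_val.comp hgc)⟩,
    ?_, ?_, ?_⟩
  · show 1 - ((g x : ℝ)) = 1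
    rw [hgx]; simp
  · intro b hb
    have hb1 : g b = 1 := hgK (subset_closure hb)
    show 1 - ((g b : ℝ)) = 0
    rw [hb1]; simp
  · intro z
    have h1 := (g z).2.1
    have h2 := (g z).2.2
    show |1 - ((g z : ℝ))| ≤ 1
    rw [abs_le]; constructor <;> simp_all <;> linarith

lemma tle_iff {γ γ' : DirFam X} :
    tle γ.top γ'.top ↔ ∀ B ∈ γ.sets, ∃ B' ∈ γ'.sets, B ⊆ closure B' := by
  constructor
  · intro h B hB
    have hUopen : γ.top.IsOpen {g : C(X, ℝ) | ∃ ε > 0, ∀ x ∈ B, |g x| ≤ 1 - ε} := by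
      intro g hg
      obtain ⟨ε, hε, hgε⟩ := hg
      refine ⟨B, hB, ε/2, by linarith, fun k hk => ⟨ε/2, by linarith, fun x hx => ?_⟩⟩
      have h1 := hk x hx
      have h2 := hgε x hx
      have h3 : |k x| - |g x| ≤ |k x - g x| := abs_sub_abs_le_abs_sub _ _
      rw [abs_sub_comm] at h3
      linarith
    have h0 : (0 : C(X, ℝ)) ∈ {g : C(X, ℝ) | ∃ ε > 0, ∀ x ∈ B, |g x| ≤ 1 - ε} :=
      ⟨1, one_pos, fun x _ => by simp⟩
    obtain ⟨B', hB', δ, hδ, hV⟩ := h _ hUopen 0 h0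
    refine ⟨B', hB', fun b hb => by_contra fun hbc => ?_⟩
    obtain ⟨k, hk1, hk0, hkb⟩ := urysohn_aux hbc
    have hkV : k ∈ Vset 0 B' δ := by
      intro z hz
      rw [ContinuousMap.zero_apply, hk0 z hz]
      simpa using hδ
    obtain ⟨ε, hε, hle⟩ := hV hkV
    have hble := hle b hb
    rw [hk1, abs_one] at hble
    linarith
  · intro H U hU g hg
    obtain ⟨A, hA, ε, hε, hV⟩ := hU g hg
    obtain ⟨B', hB', hsub⟩ := H A hA
    refine ⟨B', hB', ε/2, by linarith, fun k hk => hV fun a ha => ?_⟩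
    have hc : IsClosed {z | |g z - k z| ≤ ε/2} :=
      isClosed_le (g.continuous.sub k.continuous).abs continuous_const
    have hcl : closure B' ⊆ {z | |g z - k z| ≤ ε/2} :=
      closure_minimal (fun z hz => (hk z hz).le) hc
    have := hcl (hsub ha)
    simp only [mem_setOf_eq] at this
    linarith

lemma tle_pt_iff {x : X} {γ : DirFam X} :
    tle (Cpt x) γ.top ↔ ∃ B ∈ γ.sets, x ∈ closure B := by
  rw [show Cpt x = (ptFam x).top from rfl, tle_iff]
  constructor
  · intro h
    obtain ⟨B, hB, hsub⟩ := h {x} rfl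
    exact ⟨B, hB, hsub rfl⟩
  · rintro ⟨B, hB, hx⟩ C hC
    rw [show (ptFam x).sets = {{x}} from rfl, mem_singleton_iff] at hC
    subst hC
    exact ⟨B, hB, singleton_subset_iff.2 hx⟩

lemma tle_set_left_iff {A : Set X} {γ : DirFam X} :
    tle (CSet A) γ.top ↔ ∃ B ∈ γ.sets, A ⊆ closure B := by
  rw [show CSet A = (setFam A).top from rfl, tle_iff]
  constructor
  · intro h; exact h A rfl
  · rintro ⟨B, hB, hx⟩ C hC
    rw [show (setFam A).sets = {A} from rfl, mem_singleton_iff] at hC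
    subst hC; exact ⟨B, hB, hx⟩

lemma tle_set_right_iff {A : Set X} {γ : DirFam X} :
    tle γ.top (CSet A) ↔ ∀ B ∈ γ.sets, B ⊆ closure A := by
  rw [show CSet A = (setFam A).top from rfl, tle_iff]
  constructor
  · intro h B hB
    obtain ⟨C, hC, hsub⟩ := h B hB
    rw [show (setFam A).sets = {A} from rfl, mem_singleton_iff] at hC
    subst hC; exact hsub
  · intro h B hB; exact ⟨A, rfl, h B hB⟩

lemma tle_top (γ : DirFam X) : tle γ.top (CSet (univ : Set X)) :=
  tle_set_right_iff.2 fun B _ => (subset_univ B).trans subset_closure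

lemma eq_of_tle {s t : TopologicalSpace C(X, ℝ)} (h1 : tle s t) (h2 : tle t s) : s = t :=
  TopologicalSpace.ext (funext fun U => propext ⟨h1 U, h2 U⟩)

lemma cpt_inj {x y : X} (h : Cpt x = Cpt y) : x = y := by
  have h1 : tle (Cpt x) (ptFam y).top := by
    rw [show (ptFam y).top = Cpt y from rfl, ← h]
    exact fun U hU => hU
  obtain ⟨B, hB, hx⟩ := tle_pt_iff.1 h1
  rw [show (ptFam y).sets = {{y}} from rfl, mem_singleton_iff] at hB
  subst hB
  rwa [closure_singleton, mem_singleton_iff] at hx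

end Aux

/-- The join of two directed families. -/
def joinFam {Z : Type*} (γ γ' : DirFam Z) : DirFam Z where
  sets := {E | ∃ B ∈ γ.sets, ∃ B' ∈ γ'.sets, E = B ∪ B'}
  nonempty := by
    obtain ⟨B, hB⟩ := γ.nonempty
    obtain ⟨B', hB'⟩ := γ'.nonempty
    exact ⟨B ∪ B', B, hB, B', hB', rfl⟩
  directed := by
    rintro _ ⟨B1, hB1, C1, hC1, rfl⟩ _ ⟨B2, hB2, C2, hC2, rfl⟩
    obtain ⟨D, hD, hDsub⟩ := γ.directed B1 hB1 B2 hB2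
    obtain ⟨D', hD', hD'sub⟩ := γ'.directed C1 hC1 C2 hC2
    refine ⟨D ∪ D', ⟨D, hD, D', hD', rfl⟩, ?_⟩
    intro z hz
    simp only [Set.mem_union] at hz ⊢
    rcases hz with (h | h) | (h | h)
    · exact Or.inl (hDsub (Set.mem_union_left _ h))
    · exact Or.inr (hD'sub (Set.mem_union_left _ h))
    · exact Or.inl (hDsub (Set.mem_union_right _ h))
    · exact Or.inr (hD'sub (Set.mem_union_right _ h))

section Main

variable {X Y : Type*} [TopologicalSpace X] [T2Space X] [CompletelyRegularSpace X]
  [TopologicalSpace Y] [T2Space Y] [CompletelyRegularSpace Y]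

lemma induced_surj (φ : ↥(UX X) → ↥(UX Y)) (hbij : Function.Bijective φ)
    (hord : ∀ s t : ↥(UX X), tle s.1 t.1 ↔ tle (φ s).1 (φ t).1)
    (f : X → Y) (hf : ∀ x : X, (φ ⟨Cpt x, ptFam x, rfl⟩).1 = Cpt (f x)) :
    Function.Surjective f := by
  intro y
  obtain ⟨s, hs⟩ := hbij.2 ⟨Cpt y, ptFam y, rfl⟩
  obtain ⟨γ, hγ⟩ := s.2
  by_cases hne : ∃ B ∈ γ.sets, B.Nonempty
  · obtain ⟨B, hB, x, hx⟩ := hne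
    have h1 : tle (Cpt x) s.1 := by
      rw [hγ]; exact tle_pt_iff.2 ⟨B, hB, subset_closure hx⟩
    have h2 := (hord ⟨Cpt x, ptFam x, rfl⟩ s).1 h1
    rw [hf, hs] at h2
    have h3 : tle (Cpt (f x)) (ptFam y).top := h2
    obtain ⟨B', hB', hmem⟩ := tle_pt_iff.1 h3
    rw [show (ptFam y).sets = {{y}} from rfl, mem_singleton_iff] at hB'
    subst hB'
    rw [closure_singleton, mem_singleton_iff] at hmem
    exact ⟨x, hmem⟩
  · exfalso
    push_neg at hne
    have hsE : s = ⟨(cEmptyFam X).top, cEmptyFam X, rfl⟩ := by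
      apply Subtype.ext
      rw [hγ]
      apply eq_of_tle
      · refine (tle_iff (γ' := cEmptyFam X)).2 fun B hB => ⟨∅, rfl, ?_⟩
        rw [hne B hB]
        exact subset_closure
      · refine (tle_iff (γ := cEmptyFam X)).2 fun B hB => ?_
        rw [show (cEmptyFam X).sets = {∅} from rfl, mem_singleton_iff] at hB
        subst hB
        obtain ⟨C, hC⟩ := γ.nonempty
        exact ⟨C, hC, empty_subset _⟩
    have hbot : ∀ t : ↥(UX Y), tle (Cpt y) t.1 := by
      intro t
      obtain ⟨u, hu⟩ := hbij.2 t
      obtain ⟨η, hη⟩ := u.2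
      have h1 : tle s.1 u.1 := by
        rw [hsE, hη]
        refine (tle_iff (γ := cEmptyFam X)).2 fun B hB => ?_
        rw [show (cEmptyFam X).sets = {∅} from rfl, mem_singleton_iff] at hB
        subst hB
        obtain ⟨C, hC⟩ := η.nonempty
        exact ⟨C, hC, empty_subset _⟩
      have h2 := (hord s u).1 h1
      rwa [hs, hu] at h2
    have h3 : tle (Cpt y) (cEmptyFam Y).top :=
      hbot ⟨(cEmptyFam Y).top, cEmptyFam Y, rfl⟩
    obtain ⟨B', hB', hmem⟩ := tle_pt_iff.1 h3
    rw [show (cEmptyFam Y).sets = {∅} from rfl, mem_singleton_iff] at hB'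
    subst hB'
    rw [closure_empty] at hmem
    exact hmem

lemma induced_inj (φ : ↥(UX X) → ↥(UX Y)) (hbij : Function.Bijective φ)
    (hord : ∀ s t : ↥(UX X), tle s.1 t.1 ↔ tle (φ s).1 (φ t).1)
    (f : X → Y) (hf : ∀ x : X, (φ ⟨Cpt x, ptFam x, rfl⟩).1 = Cpt (f x)) :
    Function.Injective f := by
  intro x x' h
  have h1 : (φ ⟨Cpt x, ptFam x, rfl⟩) = (φ ⟨Cpt x', ptFam x', rfl⟩) :=
    Subtype.ext (by rw [hf, hf, h])
  exact cpt_inj (congrArg Subtype.val (hbij.1 h1))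

lemma induced_clopen (φ : ↥(UX X) → ↥(UX Y)) (hbij : Function.Bijective φ)
    (hord : ∀ s t : ↥(UX X), tle s.1 t.1 ↔ tle (φ s).1 (φ t).1)
    (f : X → Y) (hf : ∀ x : X, (φ ⟨Cpt x, ptFam x, rfl⟩).1 = Cpt (f x))
    (A : Set X) (hA : IsClopen A) :
    IsClopen (f '' A) ∧ (φ ⟨CSet A, setFam A, rfl⟩).1 = CSet (f '' A) := by
  have hfs := induced_surj φ hbij hord f hf
  have hfi := induced_inj φ hbij hord f hf
  obtain ⟨δ, hδ⟩ := (φ ⟨CSet A, setFam A, rfl⟩).2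
  obtain ⟨δ', hδ'⟩ := (φ ⟨CSet Aᶜ, setFam Aᶜ, rfl⟩).2
  have claim : ∀ (A0 : Set X), IsClopen A0 → ∀ (δ0 : DirFam Y),
      (φ ⟨CSet A0, setFam A0, rfl⟩).1 = δ0.top →
      ∀ B ∈ δ0.sets, closure B ⊆ f '' A0 := by
    intro A0 hA0 δ0 hδ0 B hB y hy
    obtain ⟨x, rfl⟩ := hfs y
    have h1 : tle (Cpt (f x)) δ0.top := tle_pt_iff.2 ⟨B, hB, hy⟩
    have h2 : tle (φ ⟨Cpt x, ptFam x, rfl⟩).1 (φ ⟨CSet A0, setFam A0, rfl⟩).1 := by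
      rw [hf, hδ0]; exact h1
    have h3 := (hord ⟨Cpt x, ptFam x, rfl⟩ ⟨CSet A0, setFam A0, rfl⟩).2 h2
    obtain ⟨C, hC, hmem⟩ := tle_pt_iff.1 h3
    rw [show (setFam A0).sets = {A0} from rfl, mem_singleton_iff] at hC
    subst hC
    rw [hA0.1.closure_eq] at hmem
    exact mem_image_of_mem f hmem
  have claim1 : ∀ B ∈ δ.sets, closure B ⊆ f '' A := claim A hA δ hδ
  have claim1' : ∀ B' ∈ δ'.sets, closure B' ⊆ (f '' A)ᶜ := by
    intro B' hB'
    have := claim Aᶜ hA.compl δ' hδ' B' hB'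
    rwa [Set.image_compl_eq ⟨hfi, hfs⟩] at this
  obtain ⟨B, hB, B', hB', hcover⟩ :
      ∃ B ∈ δ.sets, ∃ B' ∈ δ'.sets, closure (B ∪ B') = univ := by
    obtain ⟨s, hs⟩ := hbij.2 ⟨(joinFam δ δ').top, joinFam δ δ', rfl⟩
    obtain ⟨η, hη⟩ := s.2
    have hδle : tle δ.top (joinFam δ δ').top := by
      refine tle_iff.2 fun B hB => ?_
      obtain ⟨B'0, hB'0⟩ := δ'.nonempty
      exact ⟨B ∪ B'0, ⟨B, hB, B'0, hB'0, rfl⟩, subset_union_left.trans subset_closure⟩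
    have hδ'le : tle δ'.top (joinFam δ δ').top := by
      refine tle_iff.2 fun B' hB' => ?_
      obtain ⟨B0, hB0⟩ := δ.nonempty
      exact ⟨B0 ∪ B', ⟨B0, hB0, B', hB', rfl⟩, subset_union_right.trans subset_closure⟩
    have h1 : tle (CSet A) s.1 := by
      refine (hord ⟨CSet A, setFam A, rfl⟩ s).2 ?_
      rw [hs, hδ]; exact hδle
    have h2 : tle (CSet Aᶜ) s.1 := by
      refine (hord ⟨CSet Aᶜ, setFam Aᶜ, rfl⟩ s).2 ?_
      rw [hs, hδ']; exact hδ'le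
    rw [hη] at h1 h2
    obtain ⟨E, hE, hAE⟩ := tle_set_left_iff.1 h1
    obtain ⟨E', hE', hAE'⟩ := tle_set_left_iff.1 h2
    obtain ⟨E'', hE'', hsubE⟩ := η.directed E hE E' hE'
    have huniv : tle (CSet (univ : Set X)) s.1 := by
      rw [hη]
      refine tle_set_left_iff.2 ⟨E'', hE'', fun z _ => ?_⟩
      have hsubcl : closure (E ∪ E') ⊆ closure E'' := closure_mono hsubE
      by_cases hz : z ∈ A
      · exact hsubcl (closure_mono subset_union_left (hAE hz))
      · exact hsubcl (closure_mono subset_union_right (hAE' hz))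
    have h3 : tle (φ ⟨CSet (univ : Set X), setFam univ, rfl⟩).1 (joinFam δ δ').top := by
      have := (hord ⟨CSet (univ : Set X), setFam univ, rfl⟩ s).1 huniv
      rwa [hs] at this
    have h4 : tle (CSet (univ : Set Y)) (φ ⟨CSet (univ : Set X), setFam univ, rfl⟩).1 := by
      obtain ⟨r, hr⟩ := hbij.2 ⟨CSet (univ : Set Y), setFam univ, rfl⟩
      obtain ⟨ρ, hρ⟩ := r.2
      have hrle : tle r.1 (CSet (univ : Set X)) := by
        rw [hρ]; exact tle_top ρ
      have h5 := (hord r ⟨CSet (univ : Set X), setFam univ, rfl⟩).1 hrle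
      rwa [hr] at h5
    have h6 : tle (CSet (univ : Set Y)) (joinFam δ δ').top :=
      fun U hU => h3 U (h4 U hU)
    obtain ⟨E0, hE0, hsub0⟩ := tle_set_left_iff.1 h6
    obtain ⟨B, hB, B', hB', rfl⟩ := hE0
    exact ⟨B, hB, B', hB', univ_subset_iff.1 hsub0⟩
  have hclosU : closure B ∪ closure B' = univ := by rw [← closure_union, hcover]
  have hBsub : closure B ⊆ f '' A := claim1 B hB
  have hB'sub : closure B' ⊆ (f '' A)ᶜ := claim1' B' hB'
  have hEq : f '' A = closure B := by
    refine Subset.antisymm (fun y hy => ?_) hBsub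
    have hmem : y ∈ closure B ∪ closure B' := by rw [hclosU]; trivial
    rcases hmem with h | h
    · exact h
    · exact absurd hy (hB'sub h)
  have hEq' : (f '' A)ᶜ = closure B' := by
    refine Subset.antisymm (fun y hy => ?_) hB'sub
    have hmem : y ∈ closure B ∪ closure B' := by rw [hclosU]; trivial
    rcases hmem with h | h
    · exact absurd (hBsub h) hy
    · exact h
  refine ⟨⟨?_, ?_⟩, ?_⟩
  · rw [hEq]; exact isClosed_closure
  · rw [← compl_compl (f '' A), hEq']
    exact isClosed_closure.isOpen_compl
  · rw [hδ]
    apply eq_of_tle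
    · exact tle_set_right_iff.2 fun C hC =>
        ((subset_closure.trans (claim1 C hC)).trans subset_closure)
    · exact tle_set_left_iff.2 ⟨B, hB, by rw [hEq]⟩

end Main

/-- for an order-isomorphism `φ : 𝒰_X → 𝒰_Y` with induced function `f`,
images of clopen sets are clopen and `φ(C_A) = C_{f[A]}` for clopen `A`; moreover if `Y`
is zero-dimensional then `f` is continuous. -/
theorem stmt12 {X Y : Type*} [TopologicalSpace X] [T2Space X] [CompletelyRegularSpace X]
    [TopologicalSpace Y] [T2Space Y] [CompletelyRegularSpace Y]
    (φ : ↥(UX X) → ↥(UX Y)) (hbij : Function.Bijective φ)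
    (hord : ∀ s t : ↥(UX X), tle s.1 t.1 ↔ tle (φ s).1 (φ t).1)
    (f : X → Y) (hf : ∀ x : X, (φ ⟨Cpt x, ptFam x, rfl⟩).1 = Cpt (f x)) :
    (∀ A : Set X, IsClopen A →
        IsClopen (f '' A) ∧ (φ ⟨CSet A, setFam A, rfl⟩).1 = CSet (f '' A)) ∧
      ((∀ y : Y, ∀ U ∈ nhds y, ∃ V : Set Y, IsClopen V ∧ y ∈ V ∧ V ⊆ U) →
        Continuous f) := by
  have hfs := induced_surj φ hbij hord f hf
  have hfi := induced_inj φ hbij hord f hf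
  constructor
  · exact fun A hA => induced_clopen φ hbij hord f hf A hA
  · intro hzero
    let e := Equiv.ofBijective φ hbij
    have hψbij : Function.Bijective (e.symm : ↥(UX Y) → ↥(UX X)) := e.symm.bijective
    have hφψ : ∀ t, φ (e.symm t) = t := fun t => e.apply_symm_apply t
    have hψord : ∀ s t : ↥(UX Y), tle s.1 t.1 ↔ tle (e.symm s).1 (e.symm t).1 := by
      intro s t
      have h := hord (e.symm s) (e.symm t)
      rw [hφψ, hφψ] at h
      exact h.symm
    set g : Y → X := fun y => Classical.choose (hfs y) with hg
    have hfg : ∀ y, f (g y) = y := fun y => Classical.choose_spec (hfs y)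
    have hψf : ∀ y : Y, (e.symm ⟨Cpt y, ptFam y, rfl⟩).1 = Cpt (g y) := by
      intro y
      have h1 : φ ⟨Cpt (g y), ptFam (g y), rfl⟩ = ⟨Cpt y, ptFam y, rfl⟩ :=
        Subtype.ext (by rw [hf]; exact congrArg Cpt (hfg y))
      have h2 : e.symm ⟨Cpt y, ptFam y, rfl⟩ = ⟨Cpt (g y), ptFam (g y), rfl⟩ := by
        rw [← h1]
        exact e.symm_apply_apply _
      rw [h2]
    rw [continuous_iff_continuousAt]
    intro x
    rw [continuousAt_def]
    intro U hU
    obtain ⟨V, hV, hyV, hVU⟩ := hzero (f x) U hU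
    have hclo := (induced_clopen (e.symm : ↥(UX Y) → ↥(UX X)) hψbij hψord g hψf V hV).1
    have hgV : g '' V = f ⁻¹' V := by
      apply Subset.antisymm
      · rintro _ ⟨y, hy, rfl⟩
        show f (g y) ∈ V
        rwa [hfg y]
      · intro z hz
        exact ⟨f z, hz, hfi (hfg (f z))⟩
    rw [hgV] at hclo
    exact Filter.mem_of_superset (hclo.2.mem_nhds hyV) (preimage_mono hVU)
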